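/- Let ε ∈ [0,1) and suppose there exists a randomized protocol for the combinatorial Slepian–Wolf scheme with parameters (n, T, ε) whose messages have lengths m_A and m_B. Then 2^{m_A+m_B} ≥ (1−ε)·2^n·V(n,T), 2^{m_A} ≥ (1−ε)·V(n,T), and 2^{m_B} ≥ (1−ε)·V(n,T). -/

import Mathlib

/-- `V n T` is the volume of the Hamming ball of radius `T` in `{0,1}^n`. -/
def V (n T : ℕ) : ℕ := ∑ i ∈ Finset.range (T + 1), n.choose i

/-- A triple of maps forms a randomized protocol for the combinatorial
Slepian–Wolf scheme with parameters `(n, T, ε)`: for each pair of inputs at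
Hamming distance at most `T`, decoding succeeds with probability greater than
`1 − ε` over the three independent uniform random strings `r_A, r_B, r_C`. -/
def RandProtocol (n T R mA mB : ℕ)
    (CodeA : (Fin n → Bool) → (Fin R → Bool) → (Fin mA → Bool))
    (CodeB : (Fin n → Bool) → (Fin R → Bool) → (Fin mB → Bool))
    (Decode : (Fin mA → Bool) → (Fin mB → Bool) → (Fin R → Bool) →
      (Fin n → Bool) × (Fin n → Bool)) (ε : ℝ) : Prop :=
  ∀ x y : Fin n → Bool, hammingDist x y ≤ T →
    ((Finset.univ.filter
        (fun r : (Fin R → Bool) × (Fin R → Bool) × (Fin R → Bool) =>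
          Decode (CodeA x r.1) (CodeB y r.2.1) r.2.2 = (x, y))).card : ℝ)
      > (1 - ε) * 2 ^ (3 * R)


/-! Double counting: once the random strings `ω` are fixed, every correctly decoded input is
`decode m ω` for some message `m`, so at most `|γ|` inputs succeed at each `ω`. Averaging over
`ω`, the expected number of correctly decoded inputs in a set `S` is at most `|γ|`, while each
input succeeds with probability at least `1 - ε`; hence `(1 - ε) |S| ≤ |γ|`. Take for `S` all
pairs at distance `≤ T` (`2ⁿ V(n,T)` of them, both messages) or a Hamming ball of one side with
the other input fixed (`V(n,T)` of them, one message). -/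

open Finset

section HammingBall

variable {ι : Type*} [Fintype ι] [DecidableEq ι]

theorem card_hammingDist_eq (x : ι → Bool) (i : ℕ) :
    #{y | hammingDist x y = i} = (Fintype.card ι).choose i := by
  rw [← card_univ, ← card_powersetCard]
  refine card_nbij' (fun y => ({j | x j ≠ y j} : Finset ι))
    (fun s j => if j ∈ s then !x j else x j) ?_ ?_ ?_ ?_
  · intro y hy
    simpa [mem_powersetCard, hammingDist] using hy
  · intro s hs
    have hflip : ({j | x j ≠ if j ∈ s then !x j else x j} : Finset ι) = s := by
      ext j
      by_cases hj : j ∈ s <;> simp [hj]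
    simp only [mem_coe, mem_powersetCard, mem_filter, mem_univ, true_and] at hs ⊢
    rw [hammingDist, hflip, hs.2]
  · intro y _
    funext j
    cases hx : x j <;> cases hy : y j <;> simp [hx, hy]
  · intro s _
    ext j
    by_cases hj : j ∈ s <;> simp [hj]

theorem card_hammingDist_le (x : ι → Bool) (T : ℕ) :
    #{y | hammingDist x y ≤ T} = ∑ i ∈ range (T + 1), (Fintype.card ι).choose i := by
  have hmaps :
      Set.MapsTo (hammingDist x) ({y | hammingDist x y ≤ T} : Finset _) (range (T + 1)) :=
    fun y hy => by simpa [Nat.lt_succ_iff] using hy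
  rw [card_eq_sum_card_fiberwise hmaps]
  refine sum_congr rfl fun i hi => ?_
  rw [← card_hammingDist_eq x i, filter_filter]
  refine congrArg card (filter_congr fun y _ => and_iff_right_of_imp fun hy => ?_)
  rw [hy]
  exact Nat.lt_succ_iff.mp (mem_range.mp hi)

theorem card_pairs_hammingDist_le (T : ℕ) :
    #{p : (ι → Bool) × (ι → Bool) | hammingDist p.1 p.2 ≤ T} =
      2 ^ Fintype.card ι * ∑ i ∈ range (T + 1), (Fintype.card ι).choose i := by
  rw [card_filter, Fintype.sum_prod_type]
  simp only [← card_filter, card_hammingDist_le, sum_const, card_univ, Fintype.card_fun,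
    Fintype.card_bool, smul_eq_mul]

end HammingBall

section DoubleCounting

variable {α Ω γ : Type*} [DecidableEq α] [Fintype Ω] [Fintype γ]

theorem sum_card_decode_eq_le (S : Finset α) (encode : α → Ω → γ) (decode : γ → Ω → α) :
    ∑ a ∈ S, #{ω | decode (encode a ω) ω = a} ≤ Fintype.card γ * Fintype.card Ω := by
  simp only [card_filter]
  rw [sum_comm, ← card_univ (α := Ω), mul_comm, ← smul_eq_mul, ← sum_const]
  refine sum_le_sum fun ω _ => ?_
  rw [← card_filter]
  calc #{a ∈ S | decode (encode a ω) ω = a}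
      ≤ #(univ.image (decode · ω)) := card_le_card fun a ha => by
        rw [(mem_filter.mp ha).2.symm]; exact mem_image_of_mem _ (mem_univ _)
    _ ≤ Fintype.card γ := card_image_le

theorem mul_card_le_of_decode [Nonempty Ω] (S : Finset α) (encode : α → Ω → γ)
    (decode : γ → Ω → α) (p : ℝ)
    (hsucc : ∀ a ∈ S, p * Fintype.card Ω ≤ #{ω | decode (encode a ω) ω = a}) :
    p * #S ≤ Fintype.card γ := by
  have hΩ : (0 : ℝ) < Fintype.card Ω := by exact_mod_cast Fintype.card_pos
  refine le_of_mul_le_mul_right ?_ hΩ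
  calc p * #S * Fintype.card Ω = ∑ a ∈ S, p * (Fintype.card Ω : ℝ) := by
        rw [sum_const, nsmul_eq_mul]; ring
    _ ≤ ∑ a ∈ S, (#{ω | decode (encode a ω) ω = a} : ℝ) := sum_le_sum hsucc
    _ ≤ Fintype.card γ * Fintype.card Ω := by
        exact_mod_cast sum_card_decode_eq_le S encode decode

end DoubleCounting

abbrev RandomTriple (R : ℕ) : Type := (Fin R → Bool) × (Fin R → Bool) × (Fin R → Bool)

theorem card_randomTriple (R : ℕ) : Fintype.card (RandomTriple R) = 2 ^ (3 * R) := by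
  simp only [Fintype.card_prod, Fintype.card_fun, Fintype.card_bool, Fintype.card_fin]
  ring

theorem stmt8_general (ε : ℝ)
    {n T R mA mB : ℕ}
    (CodeA : (Fin n → Bool) → (Fin R → Bool) → (Fin mA → Bool))
    (CodeB : (Fin n → Bool) → (Fin R → Bool) → (Fin mB → Bool))
    (Decode : (Fin mA → Bool) → (Fin mB → Bool) → (Fin R → Bool) →
      (Fin n → Bool) × (Fin n → Bool))
    (hprot : RandProtocol n T R mA mB CodeA CodeB Decode ε) :
    (2 : ℝ) ^ (mA + mB) ≥ (1 - ε) * 2 ^ n * V n T ∧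
    (2 : ℝ) ^ mA ≥ (1 - ε) * V n T ∧
    (2 : ℝ) ^ mB ≥ (1 - ε) * V n T := by
  have hsucc (x y : Fin n → Bool) (h : hammingDist x y ≤ T) :
      (1 - ε) * (Fintype.card (RandomTriple R) : ℝ) ≤
        #{r : RandomTriple R | Decode (CodeA x r.1) (CodeB y r.2.1) r.2.2 = (x, y)} := by
    rw [card_randomTriple]
    exact_mod_cast (hprot x y h).le
  refine ⟨?_, ?_, ?_⟩
  · have hbound := mul_card_le_of_decode {p : (Fin n → Bool) × (Fin n → Bool) | hammingDist p.1 p.2 ≤ T}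
      (fun p (r : RandomTriple R) => (CodeA p.1 r.1, CodeB p.2 r.2.1))
      (fun m r => Decode m.1 m.2 r.2.2) (1 - ε) fun p hp => hsucc p.1 p.2 (mem_filter.mp hp).2
    rw [card_pairs_hammingDist_le] at hbound
    simpa [V, pow_add, mul_assoc] using hbound
  · have hbound := mul_card_le_of_decode {x | hammingDist (fun _ => false) x ≤ T}
      (fun x (r : RandomTriple R) => CodeA x r.1)
      (fun m r => (Decode m (CodeB (fun _ => false) r.2.1) r.2.2).1) (1 - ε) fun x hx =>
        (hsucc x _ (hammingDist_comm x _ ▸ (mem_filter.mp hx).2)).trans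
          (by gcongr with r; exact fun h => congrArg Prod.fst h)
    simpa [card_hammingDist_le, V] using hbound
  · have hbound := mul_card_le_of_decode {y | hammingDist (fun _ => false) y ≤ T}
      (fun y (r : RandomTriple R) => CodeB y r.2.1)
      (fun m r => (Decode (CodeA (fun _ => false) r.1) m r.2.2).2) (1 - ε) fun y hy =>
        (hsucc _ y (mem_filter.mp hy).2).trans
          (by gcongr with r; exact fun h => congrArg Prod.snd h)
    simpa [card_hammingDist_le, V] using hbound

theorem stmt8 (ε : ℝ) (hε0 : 0 ≤ ε) (hε1 : ε < 1)
    {n T R mA mB : ℕ}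
    (CodeA : (Fin n → Bool) → (Fin R → Bool) → (Fin mA → Bool))
    (CodeB : (Fin n → Bool) → (Fin R → Bool) → (Fin mB → Bool))
    (Decode : (Fin mA → Bool) → (Fin mB → Bool) → (Fin R → Bool) →
      (Fin n → Bool) × (Fin n → Bool))
    (hprot : RandProtocol n T R mA mB CodeA CodeB Decode ε) :
    (2 : ℝ) ^ (mA + mB) ≥ (1 - ε) * 2 ^ n * V n T ∧
    (2 : ℝ) ^ mA ≥ (1 - ε) * V n T ∧
    (2 : ℝ) ^ mB ≥ (1 - ε) * V n T :=
  stmt8_general ε CodeA CodeB Decode hprot
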